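/- Under the binary homogeneous Dawid–Skene model with full assignment: if w̄ ≥ 1/2 + 1/M, then for every worker i and every item j, w_i − ξ₁ ≤ P(Z_ij = ŷ_j^mv | y_j) ≤ w_i + ξ₂, where ξ₁ = w_i·exp(−2M²·(w̄ − 1/2 + (1−w_i)/M)²/(M−1)) and ξ₂ = (1−w_i)·exp(−2M²·(w̄ − 1/2 − w_i/M)²/(M−1)); moreover the same bounds hold unconditionally: w_i − ξ₁ ≤ P(Z_ij = ŷ_j^mv) ≤ w_i + ξ₂. -/

import Mathlib

/-!
Condition on `y_j = k`. Given the label, the workers are correct independently with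
probabilities `w_i'`, so by the law of total probability over worker `i`,
`P(Z_ij = ŷ_j | y_j) = w_i P(ŷ_j = k | i correct) + (1 - w_i) P(ŷ_j ≠ k | i wrong)`.
The majority vote can only be wrong when at most `M / 2` workers are correct. Among the other
`M - 1` workers the expected number of correct ones is `M w̄ - w_i`, so Hoeffding's inequality
bounds the probability that at most `M / 2 - 1` of them are correct (relevant when `i` is
correct), resp. at most `M / 2` (when `i` is wrong), by the exponential factor of `ξ₁`, resp.
`ξ₂`. The unconditional bounds follow by averaging over the two values of `y_j`.
-/

open MeasureTheory ProbabilityTheory Real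

noncomputable section

namespace OneStepWMV

/-- Majority vote for item `j` of a `{−1,+1}`-valued label matrix `Z` (with `sign 0 = +1`). -/
def mvSign {M N : ℕ} (Z : Fin M → Fin N → ℤ) (j : Fin N) : ℤ :=
  if 0 ≤ ∑ i, Z i j then 1 else -1

/-- Estimated accuracy of worker `i`: its agreement rate with the majority vote. -/
def what {M N : ℕ} (Z : Fin M → Fin N → ℤ) (i : Fin M) : ℝ :=
  (N : ℝ)⁻¹ * ∑ j, if Z i j = mvSign Z j then (1 : ℝ) else 0

/-- One-step weighted majority voting score `f_j(Z) = Σ_i (2ŵ_i − 1) Z_ij` of item `j`. -/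
def wmvScore {M N : ℕ} (Z : Fin M → Fin N → ℤ) (j : Fin N) : ℝ :=
  ∑ i, (2 * what Z i - 1) * (Z i j : ℝ)

/-- One-step weighted majority vote for item `j` (with `sign 0 = +1`). -/
def wmvSign {M N : ℕ} (Z : Fin M → Fin N → ℤ) (j : Fin N) : ℤ :=
  if 0 ≤ wmvScore Z j then 1 else -1

end OneStepWMV

namespace DawidSkene

open Finset

theorem one_sub_add_mul_exp_le {p : ℝ} (hp0 : 0 ≤ p) (hp1 : p ≤ 1) (t : ℝ) :
    1 - p + p * exp t ≤ exp (p * t + t ^ 2 / 8) := by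
  -- Hoeffding's lemma for the Bernoulli(p) law, realised on `Bool`.
  set ν : Measure Bool :=
    ENNReal.ofReal (1 - p) • Measure.dirac false + ENNReal.ofReal p • Measure.dirac true
  have : IsProbabilityMeasure ν := ⟨by
    simp [ν, ← ENNReal.ofReal_add (sub_nonneg.2 hp1) hp0]⟩
  have hν (f : Bool → ℝ) : ∫ b, f b ∂ν = (1 - p) * f false + p * f true := by
    rw [integral_add_measure ((integrable_dirac (by simp)).smul_measure ENNReal.ofReal_ne_top)
      ((integrable_dirac (by simp)).smul_measure ENNReal.ofReal_ne_top)]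
    simp [integral_smul_measure, sub_nonneg.2 hp1, hp0]
  let X : Bool → ℝ := fun b => if b then 1 else 0
  have hmgf := (hasSubgaussianMGF_of_mem_Icc (X := X) (μ := ν) (a := 0) (b := 1)
    (measurable_of_finite X).aemeasurable (ae_of_all _ fun b => by cases b <;> simp [X])).mgf_le t
  norm_num [mgf, hν, X] at hmgf
  have e0 : exp (p * t) * exp (-(t * p)) = 1 := by rw [← exp_add]; ring_nf; exact exp_zero
  have e1 : exp (p * t) * exp (t * (1 - p)) = exp t := by rw [← exp_add]; ring_nf
  calc 1 - p + p * exp t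
      = exp (p * t) * ((1 - p) * exp (-(t * p)) + p * exp (t * (1 - p))) := by
        linear_combination (p - 1) * e0 - p * e1
    _ ≤ exp (p * t) * exp (1 / 4 * t ^ 2 / 2) := by gcongr
    _ = exp (p * t + t ^ 2 / 8) := by rw [← exp_add]; ring_nf

section BernoulliWeight

variable {ι : Type*} [DecidableEq ι] {w : ι → ℝ}

/-- The probability that, of the independent events of probabilities `w i` indexed by `s`,
exactly those indexed by `T` occur. -/
def bernoulliWeight (s : Finset ι) (w : ι → ℝ) (T : Finset ι) : ℝ :=
  (∏ i ∈ T, w i) * ∏ i ∈ s \ T, (1 - w i)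

theorem bernoulliWeight_nonneg (hw0 : ∀ i, 0 ≤ w i) (hw1 : ∀ i, w i ≤ 1) (s T : Finset ι) :
    0 ≤ bernoulliWeight s w T :=
  mul_nonneg (prod_nonneg fun i _ => hw0 i) (prod_nonneg fun i _ => sub_nonneg.2 (hw1 i))

theorem sum_bernoulliWeight_mul_pow (s : Finset ι) (x : ℝ) :
    ∑ T ∈ s.powerset, bernoulliWeight s w T * x ^ T.card = ∏ i ∈ s, (w i * x + (1 - w i)) := by
  rw [prod_add]
  refine sum_congr rfl fun T _ => ?_
  rw [bernoulliWeight, prod_mul_distrib, prod_const]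
  ring

theorem sum_bernoulliWeight (s : Finset ι) : ∑ T ∈ s.powerset, bernoulliWeight s w T = 1 := by
  simpa using sum_bernoulliWeight_mul_pow (w := w) s 1

theorem sum_filter_bernoulliWeight_add_not (s : Finset ι) (Q : Finset ι → Prop)
    [DecidablePred Q] :
    ∑ T ∈ s.powerset with Q T, bernoulliWeight s w T
      = 1 - ∑ T ∈ s.powerset with ¬ Q T, bernoulliWeight s w T := by
  rw [eq_sub_iff_add_eq, sum_filter_add_sum_filter_not, sum_bernoulliWeight]

/-- Hoeffding's inequality for the lower tail of the number of events that occur. -/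
theorem sum_filter_bernoulliWeight_le_exp (hw0 : ∀ i, 0 ≤ w i) (hw1 : ∀ i, w i ≤ 1)
    {s : Finset ι} (hs : s.Nonempty) {a : ℝ} (ha : a ≤ ∑ i ∈ s, w i)
    (Q : Finset ι → Prop) [DecidablePred Q] (hQ : ∀ T ⊆ s, Q T → (T.card : ℝ) ≤ a) :
    ∑ T ∈ s.powerset with Q T, bernoulliWeight s w T
      ≤ exp (-2 * (∑ i ∈ s, w i - a) ^ 2 / s.card) := by
  have hn : (0 : ℝ) < s.card := by exact_mod_cast hs.card_pos
  -- Chernoff's bound with the optimal parameter `l`.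
  set l := 4 * (∑ i ∈ s, w i - a) / s.card with hl
  have hl0 : 0 ≤ l := div_nonneg (by linarith) hn.le
  have hW := bernoulliWeight_nonneg hw0 hw1 s
  calc ∑ T ∈ s.powerset with Q T, bernoulliWeight s w T
      ≤ ∑ T ∈ s.powerset with Q T, bernoulliWeight s w T * exp (l * (a - T.card)) := by
        refine sum_le_sum fun T hT => le_mul_of_one_le_right (hW T) (one_le_exp ?_)
        obtain ⟨hTs, hQT⟩ := mem_filter.1 hT
        exact mul_nonneg hl0 (sub_nonneg.2 (hQ T (mem_powerset.1 hTs) hQT))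
    _ ≤ ∑ T ∈ s.powerset, bernoulliWeight s w T * exp (l * (a - T.card)) :=
        sum_le_sum_of_subset_of_nonneg (filter_subset _ _)
          fun T _ _ => mul_nonneg (hW T) (exp_pos _).le
    _ = exp (l * a) * ∏ i ∈ s, (w i * exp (-l) + (1 - w i)) := by
        rw [← sum_bernoulliWeight_mul_pow, mul_sum]
        refine sum_congr rfl fun T _ => ?_
        rw [← exp_nat_mul, mul_sub, exp_sub, mul_neg, exp_neg, mul_comm (T.card : ℝ) l,
          div_eq_mul_inv]
        ring
    _ ≤ exp (l * a) * ∏ i ∈ s, exp (w i * -l + (-l) ^ 2 / 8) := by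
        refine mul_le_mul_of_nonneg_left
          (prod_le_prod (fun i _ => ?_) (fun i _ => ?_)) (exp_pos _).le
        · exact add_nonneg (mul_nonneg (hw0 i) (exp_pos _).le) (sub_nonneg.2 (hw1 i))
        · linarith [one_sub_add_mul_exp_le (hw0 i) (hw1 i) (-l)]
    _ = exp (-2 * (∑ i ∈ s, w i - a) ^ 2 / s.card) := by
        rw [← exp_sum, ← exp_add, sum_add_distrib, ← sum_mul, sum_const, nsmul_eq_mul, hl]
        congr 1
        field_simp
        ring

theorem bernoulliWeight_insert_of_notMem {i : ι} {s T : Finset ι} (hi : i ∉ s) (hT : T ⊆ s) :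
    bernoulliWeight (insert i s) w T = (1 - w i) * bernoulliWeight s w T := by
  rw [bernoulliWeight, bernoulliWeight, insert_sdiff_of_notMem s (fun h => hi (hT h)),
    prod_insert (fun h => hi (mem_sdiff.1 h).1)]
  ring

theorem bernoulliWeight_insert_insert {i : ι} {s T : Finset ι} (hi : i ∉ s) (hT : T ⊆ s) :
    bernoulliWeight (insert i s) w (insert i T) = w i * bernoulliWeight s w T := by
  rw [bernoulliWeight, bernoulliWeight, insert_sdiff_insert, sdiff_insert_of_notMem hi,
    prod_insert (fun h => hi (hT h))]
  ring

theorem sum_filter_bernoulliWeight_insert {i : ι} {s : Finset ι} (hi : i ∉ s)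
    (Q : Finset ι → Prop) [DecidablePred Q] :
    ∑ T ∈ (insert i s).powerset with Q T, bernoulliWeight (insert i s) w T
      = w i * ∑ T ∈ s.powerset with Q (insert i T), bernoulliWeight s w T
        + (1 - w i) * ∑ T ∈ s.powerset with Q T, bernoulliWeight s w T := by
  rw [sum_filter, sum_powerset_insert hi, add_comm]
  congr 1 <;> rw [sum_filter, mul_sum] <;> refine sum_congr rfl fun T hT => ?_ <;> split_ifs <;>
    simp [bernoulliWeight_insert_of_notMem hi (mem_powerset.1 hT),
      bernoulliWeight_insert_insert hi (mem_powerset.1 hT)]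

end BernoulliWeight

section Agreement

variable {ι : Type*} [Fintype ι] [DecidableEq ι] {w : ι → ℝ}

theorem sum_agree_bernoulliWeight_eq (i : ι) (P : Finset ι → Prop) [DecidablePred P] :
    ∑ T with (i ∈ T ↔ P T), bernoulliWeight univ w T
      = w i * ∑ T ∈ (univ.erase i).powerset with P (insert i T),
          bernoulliWeight (univ.erase i) w T
        + (1 - w i) * ∑ T ∈ (univ.erase i).powerset with ¬ P T,
          bernoulliWeight (univ.erase i) w T := by
  set u := univ.erase i
  have hi : i ∉ u := notMem_erase i univ
  rw [← powerset_univ, ← insert_erase (mem_univ i), sum_filter_bernoulliWeight_insert hi]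
  congr 3 <;> refine filter_congr fun T hT => ?_
  · exact ⟨fun h => h.1 (mem_insert_self i T), fun h => iff_of_true (mem_insert_self i T) h⟩
  · have hiT : i ∉ T := fun h => hi (mem_powerset.1 hT h)
    exact ⟨fun h hPT => hiT (h.2 hPT), fun h => iff_of_false hiT h⟩

theorem sum_agree_bernoulliWeight_bounds (hw0 : ∀ i, 0 ≤ w i) (hw1 : ∀ i, w i ≤ 1) {i : ι}
    (hn : 2 ≤ Fintype.card ι) (hm : (Fintype.card ι : ℝ) / 2 ≤ ∑ i' ∈ univ.erase i, w i')
    (P : Finset ι → Prop) [DecidablePred P] (hP : ∀ T, ¬ P T → 2 * T.card ≤ Fintype.card ι) :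
    w i - w i * exp (-2 * (∑ i' ∈ univ.erase i, w i' - (Fintype.card ι / 2 - 1)) ^ 2
        / (Fintype.card ι - 1)) ≤ ∑ T with (i ∈ T ↔ P T), bernoulliWeight univ w T
    ∧ ∑ T with (i ∈ T ↔ P T), bernoulliWeight univ w T
      ≤ w i + (1 - w i) * exp (-2 * (∑ i' ∈ univ.erase i, w i' - Fintype.card ι / 2) ^ 2
        / (Fintype.card ι - 1)) := by
  set u := univ.erase i
  have hiu : i ∉ u := notMem_erase i univ
  have hcardℕ : u.card = Fintype.card ι - 1 := by rw [card_erase_of_mem (mem_univ i), card_univ]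
  have hcard : (u.card : ℝ) = Fintype.card ι - 1 := by
    rw [hcardℕ, Nat.cast_sub (by omega), Nat.cast_one]
  have hu : u.Nonempty := card_pos.1 (by omega)
  have htail₁ : ∑ T ∈ u.powerset with ¬ P (insert i T), bernoulliWeight u w T
      ≤ exp (-2 * (∑ i' ∈ u, w i' - (Fintype.card ι / 2 - 1)) ^ 2 / (Fintype.card ι - 1)) := by
    rw [← hcard]
    refine sum_filter_bernoulliWeight_le_exp hw0 hw1 hu (by linarith) _ fun T hT hPT => ?_
    have hcardT := hP _ hPT
    rw [card_insert_of_notMem (fun h => hiu (hT h))] at hcardT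
    rw [le_sub_iff_add_le, le_div_iff₀ two_pos]
    exact_mod_cast (by omega : (T.card + 1) * 2 ≤ Fintype.card ι)
  have htail₀ : ∑ T ∈ u.powerset with ¬ P T, bernoulliWeight u w T
      ≤ exp (-2 * (∑ i' ∈ u, w i' - Fintype.card ι / 2) ^ 2 / (Fintype.card ι - 1)) := by
    rw [← hcard]
    refine sum_filter_bernoulliWeight_le_exp hw0 hw1 hu hm _ fun T _ hPT => ?_
    rw [le_div_iff₀ two_pos]
    exact_mod_cast (by linarith [hP _ hPT] : T.card * 2 ≤ Fintype.card ι)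
  have hcompl := sum_filter_bernoulliWeight_add_not (w := w) u (fun T => P (insert i T))
  have hW := bernoulliWeight_nonneg hw0 hw1 u
  have hnonneg₁ : 0 ≤ ∑ T ∈ u.powerset with ¬ P (insert i T), bernoulliWeight u w T :=
    sum_nonneg fun T _ => hW T
  have hnonneg₀ : 0 ≤ ∑ T ∈ u.powerset with ¬ P T, bernoulliWeight u w T :=
    sum_nonneg fun T _ => hW T
  rw [sum_agree_bernoulliWeight_eq, hcompl]
  have hwi := sub_nonneg.2 (hw1 i)
  constructor
  · nlinarith [mul_le_mul_of_nonneg_left htail₁ (hw0 i), mul_nonneg hwi hnonneg₀]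
  · nlinarith [mul_le_mul_of_nonneg_left htail₀ hwi, mul_nonneg (hw0 i) hnonneg₁]

end Agreement

section Votes

variable {ι : Type*} {k : ℤ}

def majorityVote [Fintype ι] (v : ι → ℤ) : ℤ := if 0 ≤ ∑ i, v i then 1 else -1

theorem mvSign_eq_majorityVote {M N : ℕ} (Z : Fin M → Fin N → ℤ) (j : Fin N) :
    OneStepWMV.mvSign Z j = majorityVote (Z · j) := rfl

theorem majorityVote_eq_one_or [Fintype ι] (v : ι → ℤ) :
    majorityVote v = 1 ∨ majorityVote v = -1 := by
  unfold majorityVote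
  split_ifs <;> simp

variable [DecidableEq ι]

def votes (k : ℤ) (T : Finset ι) (i : ι) : ℤ := if i ∈ T then k else -k

theorem votes_eq_iff (hk : k = 1 ∨ k = -1) {s : ℤ} (hs : s = 1 ∨ s = -1) (T : Finset ι) (i : ι) :
    votes k T i = s ↔ (i ∈ T ↔ s = k) := by
  unfold votes
  split_ifs with hi <;> simp only [hi, true_iff, false_iff] <;> omega

theorem sum_votes [Fintype ι] (k : ℤ) (T : Finset ι) :
    ∑ i, votes k T i = k * (2 * T.card - Fintype.card ι) := by
  simp only [votes]
  rw [sum_ite, filter_mem_eq_inter, univ_inter, ← sdiff_eq_filter, sum_const, sum_const,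
    card_univ_sdiff, nsmul_eq_mul, nsmul_eq_mul, Nat.cast_sub (card_le_univ T)]
  ring

theorem filter_eq_iff_eq_votes [Fintype ι] (hk : k = 1 ∨ k = -1) {v : ι → ℤ}
    (hv : ∀ i, v i = 1 ∨ v i = -1) (T : Finset ι) :
    ({i | v i = k} : Finset ι) = T ↔ v = votes k T := by
  simp only [Finset.ext_iff, funext_iff, mem_filter, mem_univ, true_and]
  exact forall_congr' fun i => by
    rw [eq_comm (b := votes k T i), votes_eq_iff hk (hv i)]
    exact Iff.comm

theorem eq_majorityVote_iff [Fintype ι] (hk : k = 1 ∨ k = -1) {v : ι → ℤ}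
    (hv : ∀ i, v i = 1 ∨ v i = -1) (i : ι) :
    v i = majorityVote v
      ↔ (i ∈ ({i | v i = k} : Finset ι) ↔ majorityVote (votes k {i | v i = k}) = k) := by
  conv_lhs => rw [(filter_eq_iff_eq_votes hk hv _).1 rfl]
  exact votes_eq_iff hk (majorityVote_eq_one_or _) _ _

theorem card_le_of_majorityVote_votes_ne [Fintype ι] (hk : k = 1 ∨ k = -1) (T : Finset ι)
    (h : majorityVote (votes k T) ≠ k) : 2 * T.card ≤ Fintype.card ι := by
  unfold majorityVote at h
  rw [sum_votes] at h
  split_ifs at h <;> rcases hk with rfl | rfl <;> omega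

end Votes

section Mixture

variable {Ω : Type*} [MeasurableSpace Ω] {μ : Measure Ω} [IsProbabilityMeasure μ]

theorem measureReal_mem_Icc_of_inter {A B : Set Ω}
    (hB : MeasurableSet B) {q₁ q₂ L U : ℝ} (h₁ : μ.real (A ∩ B) = μ.real B * q₁)
    (h₂ : μ.real (A ∩ Bᶜ) = μ.real Bᶜ * q₂) (hq₁ : q₁ ∈ Set.Icc L U) (hq₂ : q₂ ∈ Set.Icc L U) :
    μ.real A ∈ Set.Icc L U := by
  rw [← measureReal_inter_add_sdiff (s := A) hB, Set.sdiff_eq, h₁, h₂]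
  exact convex_Icc L U hq₁ hq₂ measureReal_nonneg measureReal_nonneg
    (probReal_add_probReal_compl hB)

end Mixture

section Law

variable {Ω ι : Type*} [MeasurableSpace Ω] {μ : Measure Ω} [IsFiniteMeasure μ]
  [Fintype ι] [DecidableEq ι] {Y : Ω → ℤ} {X : ι → Ω → ℤ} {w : ι → ℝ} {k : ℤ}

theorem bernoulliWeight_univ (w : ι → ℝ) (T : Finset ι) :
    bernoulliWeight univ w T = ∏ i, if i ∈ T then w i else 1 - w i := by
  rw [prod_ite, filter_mem_eq_inter, univ_inter, ← sdiff_eq_filter, bernoulliWeight]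

theorem measureReal_and_filter_mem (hY : Measurable Y) (hX : ∀ i, Measurable (X i))
    (hXval : ∀ i ω, X i ω = 1 ∨ X i ω = -1) (hk : k = 1 ∨ k = -1)
    (hlaw : ∀ h : ι → ℤ, (∀ i, h i = 1 ∨ h i = -1) →
      μ.real {ω | Y ω = k ∧ ∀ i, X i ω = h i}
        = μ.real {ω | Y ω = k} * ∏ i, if h i = k then w i else 1 - w i)
    (A : Finset (Finset ι)) :
    μ.real {ω | Y ω = k ∧ ({i | X i ω = k} : Finset ι) ∈ A}
      = μ.real {ω | Y ω = k} * ∑ T ∈ A, bernoulliWeight univ w T := by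
  have hE (T : Finset ι) : {ω | Y ω = k ∧ ({i | X i ω = k} : Finset ι) = T}
      = {ω | Y ω = k ∧ ∀ i, X i ω = votes k T i} := by
    simp only [filter_eq_iff_eq_votes hk (hXval · _), funext_iff]
  have hunion : {ω | Y ω = k ∧ ({i | X i ω = k} : Finset ι) ∈ A}
      = ⋃ T ∈ A, {ω | Y ω = k ∧ ({i | X i ω = k} : Finset ι) = T} := by
    ext ω
    simp
  rw [hunion, measureReal_biUnion_finset, mul_sum]
  · refine sum_congr rfl fun T _ => ?_
    have hvotes (i : ι) : votes k T i = 1 ∨ votes k T i = -1 := by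
      unfold votes; split_ifs <;> omega
    rw [hE, hlaw _ hvotes, bernoulliWeight_univ]
    simp only [votes_eq_iff hk hk]
    simp
  · exact fun T _ T' _ hne => Set.disjoint_left.2 fun ω h h' => hne (h.2.symm.trans h'.2)
  · intro T _
    rw [hE, Set.ofPred_and, Set.ofPred_forall]
    exact (measurableSet_eq_fun hY measurable_const).inter
      (.iInter fun i => measurableSet_eq_fun (hX i) measurable_const)

theorem measureReal_eq_majorityVote_and (hY : Measurable Y) (hX : ∀ i, Measurable (X i))
    (hXval : ∀ i ω, X i ω = 1 ∨ X i ω = -1) (hk : k = 1 ∨ k = -1)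
    (hlaw : ∀ h : ι → ℤ, (∀ i, h i = 1 ∨ h i = -1) →
      μ.real {ω | Y ω = k ∧ ∀ i, X i ω = h i}
        = μ.real {ω | Y ω = k} * ∏ i, if h i = k then w i else 1 - w i)
    (i : ι) :
    μ.real {ω | X i ω = majorityVote (X · ω) ∧ Y ω = k}
      = μ.real {ω | Y ω = k}
        * ∑ T with (i ∈ T ↔ majorityVote (votes k T) = k), bernoulliWeight univ w T := by
  rw [← measureReal_and_filter_mem hY hX hXval hk hlaw]
  congr 1
  ext ω
  simp only [Set.mem_ofPred_eq, mem_filter, mem_univ, true_and,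
    eq_majorityVote_iff hk (hXval · ω) i, and_comm]

end Law

section Bounds

variable {M : ℕ}

def ξ₁ (w : Fin M → ℝ) (i : Fin M) : ℝ :=
  w i * Real.exp (-(2 * (M : ℝ) ^ 2
    * ((M : ℝ)⁻¹ * ∑ i', w i' - 1 / 2 + (1 - w i) / (M : ℝ)) ^ 2) / ((M : ℝ) - 1))

def ξ₂ (w : Fin M → ℝ) (i : Fin M) : ℝ :=
  (1 - w i) * Real.exp (-(2 * (M : ℝ) ^ 2
    * ((M : ℝ)⁻¹ * ∑ i', w i' - 1 / 2 - w i / (M : ℝ)) ^ 2) / ((M : ℝ) - 1))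

theorem sum_agree_bernoulliWeight_mem_Icc {w : Fin M → ℝ} (hM : 2 ≤ M) (hw0 : ∀ i, 0 ≤ w i)
    (hw1 : ∀ i, w i ≤ 1) (hwbar : 1 / 2 + 1 / (M : ℝ) ≤ (M : ℝ)⁻¹ * ∑ i, w i) (i : Fin M)
    (P : Finset (Fin M) → Prop) [DecidablePred P] (hP : ∀ T, ¬ P T → 2 * T.card ≤ M) :
    ∑ T with (i ∈ T ↔ P T), bernoulliWeight univ w T ∈ Set.Icc (w i - ξ₁ w i) (w i + ξ₂ w i) := by
  have hM0 : (0 : ℝ) < M := by positivity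
  have hsum : ∑ i' ∈ univ.erase i, w i' = ∑ i', w i' - w i := by
    rw [← sum_erase_add _ _ (mem_univ i), add_sub_cancel_right]
  have hmean : (M : ℝ) / 2 + 1 ≤ ∑ i', w i' := by
    rwa [← mul_le_mul_iff_of_pos_left hM0, mul_inv_cancel_left₀ hM0.ne', mul_add,
      mul_one_div_cancel hM0.ne', mul_one_div] at hwbar
  obtain ⟨hlow, hup⟩ := sum_agree_bernoulliWeight_bounds hw0 hw1 (i := i) (by simpa using hM)
    (by rw [hsum, Fintype.card_fin]; linarith [hw1 i]) P (by simpa using hP)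
  simp only [Fintype.card_fin, hsum] at hlow hup
  have e₁ : (M : ℝ) * ((M : ℝ)⁻¹ * ∑ i', w i' - 1 / 2 + (1 - w i) / M)
      = ∑ i', w i' - w i - (M / 2 - 1) := by
    field_simp
    ring
  have e₂ : (M : ℝ) * ((M : ℝ)⁻¹ * ∑ i', w i' - 1 / 2 - w i / M) = ∑ i', w i' - w i - M / 2 := by
    field_simp
    ring
  have hsq (x : ℝ) : 2 * (M : ℝ) ^ 2 * x ^ 2 = 2 * (M * x) ^ 2 := by ring
  rw [ξ₁, ξ₂, hsq, hsq, e₁, e₂, ← neg_mul, ← neg_mul]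
  exact ⟨hlow, hup⟩

end Bounds

end DawidSkene

theorem worker_label_agrees_mv_bounds
    {Ω : Type*} [MeasurableSpace Ω] (μ : Measure Ω) [IsProbabilityMeasure μ]
    {M N : ℕ} (hM : 2 ≤ M)
    (y : Fin N → Ω → ℤ) (Z : Fin M → Fin N → Ω → ℤ)
    (hym : ∀ j, Measurable (y j)) (hZm : ∀ i j, Measurable (Z i j))
    (hyval : ∀ j ω, y j ω = 1 ∨ y j ω = -1)
    (hZval : ∀ i j ω, Z i j ω = 1 ∨ Z i j ω = -1)
    (w : Fin M → ℝ) (hw0 : ∀ i, 0 ≤ w i) (hw1 : ∀ i, w i ≤ 1)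
    (hlaw : ∀ (j : Fin N) (k : ℤ), (k = 1 ∨ k = -1) →
      ∀ h : Fin M → ℤ, (∀ i, h i = 1 ∨ h i = -1) →
      (μ {ω | y j ω = k ∧ ∀ i, Z i j ω = h i}).toReal
        = (μ {ω | y j ω = k}).toReal * ∏ i, (if h i = k then w i else 1 - w i))
    (hwbar : 1 / 2 + 1 / (M : ℝ) ≤ (M : ℝ)⁻¹ * ∑ i, w i) :
    ∀ (i : Fin M) (j : Fin N),
      (∀ k : ℤ, (k = 1 ∨ k = -1) → 0 < μ {ω | y j ω = k} →
        (w i - w i * Real.exp (-(2 * (M : ℝ) ^ 2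
              * ((M : ℝ)⁻¹ * ∑ i', w i' - 1 / 2 + (1 - w i) / (M : ℝ)) ^ 2)
            / ((M : ℝ) - 1))
          ≤ (μ {ω | Z i j ω = OneStepWMV.mvSign (fun i' j' => Z i' j' ω) j ∧ y j ω = k}).toReal
              / (μ {ω | y j ω = k}).toReal)
        ∧ (μ {ω | Z i j ω = OneStepWMV.mvSign (fun i' j' => Z i' j' ω) j ∧ y j ω = k}).toReal
              / (μ {ω | y j ω = k}).toReal
          ≤ w i + (1 - w i) * Real.exp (-(2 * (M : ℝ) ^ 2
              * ((M : ℝ)⁻¹ * ∑ i', w i' - 1 / 2 - w i / (M : ℝ)) ^ 2)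
            / ((M : ℝ) - 1)))
      ∧ (w i - w i * Real.exp (-(2 * (M : ℝ) ^ 2
              * ((M : ℝ)⁻¹ * ∑ i', w i' - 1 / 2 + (1 - w i) / (M : ℝ)) ^ 2)
            / ((M : ℝ) - 1))
          ≤ (μ {ω | Z i j ω = OneStepWMV.mvSign (fun i' j' => Z i' j' ω) j}).toReal)
      ∧ (μ {ω | Z i j ω = OneStepWMV.mvSign (fun i' j' => Z i' j' ω) j}).toReal
          ≤ w i + (1 - w i) * Real.exp (-(2 * (M : ℝ) ^ 2
              * ((M : ℝ)⁻¹ * ∑ i', w i' - 1 / 2 - w i / (M : ℝ)) ^ 2)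
            / ((M : ℝ) - 1)) := by
  intro i j
  simp only [← measureReal_def, DawidSkene.mvSign_eq_majorityVote]
  have hq (k : ℤ) (hk : k = 1 ∨ k = -1) :=
    DawidSkene.sum_agree_bernoulliWeight_mem_Icc hM hw0 hw1 hwbar i _ fun T hT => by
      simpa using DawidSkene.card_le_of_majorityVote_votes_ne hk T hT
  have hcond (k : ℤ) (hk : k = 1 ∨ k = -1) :=
    DawidSkene.measureReal_eq_majorityVote_and (μ := μ) (hym j) (hZm · j) (hZval · j) hk
      (hlaw j k hk) i
  have hcompl : {ω | y j ω = -1} = {ω | y j ω = 1}ᶜ := by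
    ext ω
    rcases hyval j ω with h | h <;> simp [h]
  refine ⟨fun k hk hpos => ?_, DawidSkene.measureReal_mem_Icc_of_inter
    (B := {ω | y j ω = 1}) (hym j (measurableSet_singleton 1)) (hcond 1 (.inl rfl)) ?_
    (hq 1 (.inl rfl)) (hq (-1) (.inr rfl))⟩
  · rw [hcond k hk,
      mul_div_cancel_left₀ _ ((measureReal_ne_zero_iff (measure_ne_top μ _)).2 hpos.ne')]
    exact hq k hk
  · rw [← hcompl]
    exact hcond (-1) (.inr rfl)
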